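/- arXiv:1010.3263 — 3 statements merged into one kernel-verified Lean document; each statement's English description precedes it below -/
import Mathlib

section
/- Let L be a regular language over a finite alphabet Σ with quotient complexity κ(L) = n. If L is uniquely reachable, i.e., L_w = L implies w = ε, then σ(L) ≤ (n-1)^n. -/
/-- The left quotient of a language `L` by a word `w`: `{x | w ++ x ∈ L}`. -/
def leftQ {α : Type*} (L : Set (List α)) (w : List α) : Set (List α) :=
  {x | w ++ x ∈ L}

/-- Quotient (state) complexity: the number of distinct left quotients of `L`. -/
noncomputable def quotCompl {α : Type*} (L : Set (List α)) : ℕ :=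
  Nat.card (Set.range (leftQ L))

/-- The syntactic (Myhill) congruence of `L`. -/
def synRel {α : Type*} (L : Set (List α)) (x y : List α) : Prop :=
  ∀ u v : List α, u ++ x ++ v ∈ L ↔ u ++ y ++ v ∈ L

/-- The syntactic setoid on the free semigroup of non-empty words. -/
def synSetoid {α : Type*} (L : Set (List α)) : Setoid {w : List α // w ≠ []} :=
  ⟨fun x y => synRel L x.1 y.1,
   ⟨fun _ _ _ => Iff.rfl, fun h u v => (h u v).symm,
    fun h₁ h₂ u v => (h₁ u v).trans (h₂ u v)⟩⟩

/-- Syntactic complexity: the cardinality of the syntactic semigroup of `L`. -/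
noncomputable def synCompl {α : Type*} (L : Set (List α)) : ℕ :=
  Nat.card (Quotient (synSetoid L))

/-!
The syntactic semigroup acts faithfully on the quotients of `L`: the class of `w` sends
`L_u` to `L_{uw}`, and two words are syntactically equivalent exactly when they act alike.
So `σ(L)` is at most the number of maps from the `n` quotients to the quotients reachable by a
non-empty word. Unique reachability says `L` itself is not among the latter, leaving `n - 1`
possible images for each of the `n` quotients.
-/

section

variable {α : Type*}

lemma leftQ_nil (L : Set (List α)) : leftQ L [] = L := rfl

lemma leftQ_leftQ (L : Set (List α)) (u w : List α) :
    leftQ (leftQ L u) w = leftQ L (u ++ w) := by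
  ext x
  simp [leftQ, List.append_assoc]

lemma synRel_iff_forall_leftQ_eq (L : Set (List α)) (x y : List α) :
    synRel L x y ↔ ∀ u, leftQ L (u ++ x) = leftQ L (u ++ y) :=
  forall_congr' fun _ => Set.ext_iff.symm

lemma synCompl_le_card_fun {L : Set (List α)} {T : Set (Set (List α))}
    [Finite (Set.range (leftQ L))] [Finite T]
    (hT : ∀ u w, w ≠ [] → leftQ L (u ++ w) ∈ T) :
    synCompl L ≤ Nat.card (Set.range (leftQ L) → T) := by
  have act_mem :
      ∀ (w : {w : List α // w ≠ []}) (K : Set.range (leftQ L)), leftQ K.1 w.1 ∈ T := by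
    rintro w ⟨_, u, rfl⟩
    simpa only [leftQ_leftQ] using hT u w.1 w.2
  let act (w : {w : List α // w ≠ []}) (K : Set.range (leftQ L)) : T := ⟨_, act_mem w K⟩
  have act_eq_iff : ∀ w w', act w = act w' ↔ synRel L w.1 w'.1 := by
    intro w w'
    simp only [synRel_iff_forall_leftQ_eq, funext_iff, Subtype.ext_iff, Subtype.forall,
      Set.forall_mem_range, leftQ_leftQ, act]
  let Φ : Quotient (synSetoid L) → (Set.range (leftQ L) → T) :=
    Quotient.lift act fun w w' h => (act_eq_iff w w').2 h
  have hΦ : Function.Injective Φ := by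
    rintro ⟨w⟩ ⟨w'⟩ h
    exact Quotient.sound ((act_eq_iff w w').1 h)
  exact Nat.card_le_card_of_injective Φ hΦ

end

theorem stmt_5_general {α : Type*} (L : Set (List α))
    (hreg : (Set.range (leftQ L)).Finite) (n : ℕ) (hn : quotCompl L = n)
    (hur : ∀ w : List α, leftQ L w = L → w = []) :
    synCompl L ≤ (n - 1) ^ n := by
  have := hreg.to_subtype
  have := (hreg.sdiff (t := {L})).to_subtype
  have hL : L ∈ Set.range (leftQ L) := ⟨[], leftQ_nil L⟩
  have hT : ∀ u w, w ≠ [] → leftQ L (u ++ w) ∈ Set.range (leftQ L) \ {L} :=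
    fun u w hw => ⟨⟨_, rfl⟩, fun h => hw (List.append_eq_nil_iff.mp (hur _ h)).2⟩
  calc synCompl L ≤ Nat.card (Set.range (leftQ L) → ↥(Set.range (leftQ L) \ {L})) :=
        synCompl_le_card_fun hT
    _ = (n - 1) ^ n := by
      rw [Nat.card_fun, Nat.card_coe_set_eq, Set.ncard_sdiff_singleton_of_mem hL,
        ← Nat.card_coe_set_eq, ← quotCompl, hn]

/-- If `L` is uniquely reachable (`L_w = L` implies `w = ε`),
then `σ(L) ≤ (n-1)^n` where `n = κ(L)`. -/
theorem stmt_5 {α : Type*} [Fintype α] (L : Set (List α))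
    (hreg : (Set.range (leftQ L)).Finite) (n : ℕ) (hn : quotCompl L = n)
    (hur : ∀ w : List α, leftQ L w = L → w = []) :
    synCompl L ≤ (n - 1) ^ n :=
  stmt_5_general L hreg n hn hur
end

section
/- For every n ≥ 4, let A'_n be the deterministic finite automaton with state set {0,1,…,n-1}, binary alphabet {a,d}, initial state 0 and final state set {n-1}, where a acts as the cycle (0,1,…,n-2) fixing n-1, and d maps n-2 to n-1 and fixes all other states. Then L(A'_n) is a right ideal with quotient complexity n, and its reverse L(A'_n)^R has quotient complexity exactly 2^{n-1}. -/
/-- `L` is a right ideal: it is non-empty and `L = LΣ*`. -/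
def IsRightIdeal {α : Type*} (L : Set (List α)) : Prop :=
  L.Nonempty ∧ L = {x | ∃ u ∈ L, ∃ v : List α, x = u ++ v}

/-- `L` is a left ideal: it is non-empty and `L = Σ*L`. -/
def IsLeftIdeal {α : Type*} (L : Set (List α)) : Prop :=
  L.Nonempty ∧ L = {x | ∃ u : List α, ∃ v ∈ L, x = u ++ v}

/-- `L` is a two-sided ideal: it is non-empty and `L = Σ*LΣ*`. -/
def IsTwoSidedIdeal {α : Type*} (L : Set (List α)) : Prop :=
  L.Nonempty ∧ L = {x | ∃ u : List α, ∃ w ∈ L, ∃ v : List α, x = u ++ w ++ v}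

/-- The reverse of a language. -/
def langReverse {α : Type*} (L : Set (List α)) : Set (List α) :=
  List.reverse '' L

/-- The transition function of the automaton `𝒜'_n` (the automaton `𝒜_n` of
Definition 1 restricted to the letters `a` and `d`):
`a = (0,1,…,n-2)` fixing `n-1`, and `d : n-2 ↦ n-1`. -/
def step11 (n : ℕ) (hn : 4 ≤ n) : Fin n → Fin 2 → Fin n := fun q l =>
  if l.val = 0 then -- a : the cycle (0, 1, …, n-2), fixing n-1
    if q.val = n - 2 then ⟨0, by omega⟩
    else if _h : q.val = n - 1 then q
    else ⟨q.val + 1, by have := q.isLt; omega⟩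
  else -- d : n-2 ↦ n-1, fixing all other states
    if q.val = n - 2 then ⟨n - 1, by omega⟩ else q

/-!
The automaton is minimal: state `q ≤ n - 2` is reached by `aᵠ`, the sink `n - 1` by `aⁿ⁻²d`,
the sink alone accepts the empty word, and the least `k` such that `aᵏd` is accepted from
`q ≤ n - 2` is `n - 2 - q`, which separates the other states. Since the only final state is a
sink, the language is a right ideal.

Since every state is reachable, the quotient of the reverse by `w` is determined by, and
determines, the set of states from which `wᴿ` leads to the sink. Each such set contains the sink,
and all `2ⁿ⁻¹` of them occur: `d` adds `n - 2` to the set, and a power of `a` rotates any other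
state onto `n - 2`.
-/

namespace DFA

variable {α σ : Type*} (M : DFA α σ)

/-- The state reached by `u.reverse` in the subset automaton of the reversal of `M`. -/
def statesAccepting (u : List α) : Set σ := {q | u ∈ M.acceptsFrom q}

theorem statesAccepting_cons (a : α) (u : List α) :
    M.statesAccepting (a :: u) = (M.step · a) ⁻¹' M.statesAccepting u :=
  rfl

theorem statesAccepting_append (u v : List α) :
    M.statesAccepting (u ++ v) = (M.evalFrom · u) ⁻¹' M.statesAccepting v := by
  ext q
  simp only [statesAccepting, Set.mem_preimage, Set.mem_ofPred_eq, mem_acceptsFrom,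
    evalFrom_of_append]

theorem evalFrom_replicate (q : σ) (a : α) (m : ℕ) :
    M.evalFrom q (List.replicate m a) = (M.step · a)^[m] q := by
  induction m generalizing q with
  | zero => rfl
  | succ m ih => rw [List.replicate_succ, evalFrom_cons, ih, Function.iterate_succ_apply]

theorem evalFrom_mem_accept (hclosed : ∀ q ∈ M.accept, ∀ a, M.step q a ∈ M.accept)
    {q : σ} (hq : q ∈ M.accept) (u : List α) : M.evalFrom q u ∈ M.accept := by
  induction u generalizing q with
  | nil => exact hq
  | cons a u ih => exact ih (hclosed q hq a)

theorem isRightIdeal_accepts (hne : (M.accepts : Set (List α)).Nonempty)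
    (hclosed : ∀ q ∈ M.accept, ∀ a, M.step q a ∈ M.accept) :
    IsRightIdeal (M.accepts : Set (List α)) := by
  refine ⟨hne, Set.ext fun x => ⟨fun hx => ⟨x, hx, [], (List.append_nil x).symm⟩, ?_⟩⟩
  rintro ⟨u, hu, v, rfl⟩
  show M.eval (u ++ v) ∈ M.accept
  rw [eval, evalFrom_of_append]
  exact M.evalFrom_mem_accept hclosed hu v

theorem quotCompl_accepts (heval : Function.Surjective M.eval)
    (hinj : Function.Injective M.acceptsFrom) :
    quotCompl (M.accepts : Set (List α)) = Nat.card σ := by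
  have hrange : Set.range (leftQ (M.accepts : Set (List α))) = Set.range M.acceptsFrom :=
    (congrArg Set.range (Language.leftQuotient_accepts M)).trans (heval.range_comp _)
  unfold quotCompl
  rw [hrange]
  exact Nat.card_range_of_injective hinj

theorem leftQ_langReverse_accepts (w : List α) :
    leftQ (langReverse (M.accepts : Set (List α))) w =
      (M.eval ∘ List.reverse) ⁻¹' M.statesAccepting w.reverse := by
  ext x
  unfold langReverse
  rw [← Language.reverse_eq_image]
  change M.eval (w ++ x).reverse ∈ M.accept ↔ M.evalFrom (M.eval x.reverse) w.reverse ∈ M.accept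
  rw [List.reverse_append, eval, evalFrom_of_append]

theorem quotCompl_langReverse_accepts (heval : Function.Surjective M.eval) :
    quotCompl (langReverse (M.accepts : Set (List α))) =
      Nat.card (Set.range M.statesAccepting) := by
  have hleft : leftQ (langReverse (M.accepts : Set (List α))) =
      Set.preimage (M.eval ∘ List.reverse) ∘ M.statesAccepting ∘ List.reverse :=
    funext M.leftQ_langReverse_accepts
  have hinj : Function.Injective (Set.preimage (M.eval ∘ List.reverse)) :=
    Set.preimage_injective.2 (heval.comp List.reverse_surjective)
  unfold quotCompl
  rw [hleft, Set.range_comp, List.reverse_surjective.range_comp,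
    Nat.card_image_of_injective hinj]

end DFA

theorem Set.natCard_setOf_mem {α : Type*} [Fintype α] (a : α) :
    Nat.card {S : Set α | a ∈ S} = 2 ^ (Fintype.card α - 1) := by
  classical
  let f : Set {x : α | x ≠ a} → Set α := fun T => insert a (Subtype.val '' T)
  have hinj : Function.Injective f := by
    intro T T' h
    ext ⟨x, hx⟩
    have hxa : x ≠ a := hx
    simpa [f, hxa] using congrArg (x ∈ ·) h
  have hrange : Set.range f = {S : Set α | a ∈ S} := by
    ext S
    refine ⟨by rintro ⟨T, rfl⟩; exact Set.mem_insert a _,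
      fun (hS : a ∈ S) => ⟨Subtype.val ⁻¹' S, ?_⟩⟩
    ext x
    by_cases hx : x = a
    · subst hx
      simpa [f] using hS
    · simp [f, hx]
  rw [← hrange, Nat.card_range_of_injective hinj, Nat.card_eq_fintype_card, Fintype.card_set,
    Set.card_ne_eq]

namespace Step11

variable {n : ℕ} (hn : 4 ≤ n)

def sink : Fin n := ⟨n - 1, by omega⟩

def pivot : Fin n := ⟨n - 2, by omega⟩

theorem val_le_of_ne_sink {q : Fin n} (hq : q ≠ sink hn) : q.val ≤ n - 2 := by
  have hlt := q.isLt
  have hne : q.val ≠ n - 1 := fun h => hq (Fin.ext h)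
  omega

theorem val_step (q : Fin n) (l : Fin 2) :
    (step11 n hn q l).val =
      if l.val = 0 then (if q.val = n - 2 then 0 else if q.val = n - 1 then n - 1 else q.val + 1)
      else if q.val = n - 2 then n - 1 else q.val := by
  unfold step11
  split_ifs <;> first | rfl | assumption

theorem step_sink (l : Fin 2) : step11 n hn (sink hn) l = sink hn := by
  apply Fin.ext
  rw [val_step]
  have hne : n - 1 ≠ n - 2 := by omega
  simp [sink, hne]

theorem step_pivot_one : step11 n hn (pivot hn) 1 = sink hn := by
  apply Fin.ext
  rw [val_step]
  simp [pivot, sink]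

theorem step_one_of_ne {q : Fin n} (hq : q ≠ pivot hn) : step11 n hn q 1 = q := by
  have hq' : q.val ≠ n - 2 := fun h => hq (Fin.ext h)
  apply Fin.ext
  rw [val_step]
  simp [hq']

theorem val_step_zero_of_lt {q : Fin n} (hq : q.val < n - 2) :
    (step11 n hn q 0).val = q.val + 1 := by
  rw [val_step]
  split_ifs <;> simp_all; omega

theorem step_zero_injective : Function.Injective (step11 n hn · 0) := by
  intro p q h
  have hp := p.isLt
  have hq := q.isLt
  have h' := congrArg Fin.val h
  simp only [val_step, Fin.val_zero, if_true] at h'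
  apply Fin.ext
  split_ifs at h' <;> omega

theorem val_iterate_step_zero {q : Fin n} {k : ℕ} (h : q.val + k ≤ n - 2) :
    ((step11 n hn · 0)^[k] q).val = q.val + k := by
  induction k with
  | zero => rfl
  | succ k ih =>
    have hk := ih (by omega)
    rw [Function.iterate_succ_apply', val_step_zero_of_lt hn (by omega), hk, Nat.add_assoc]

theorem iterate_step_zero_sink (k : ℕ) : (step11 n hn · 0)^[k] (sink hn) = sink hn :=
  Function.iterate_fixed (step_sink hn 0) k

def dfa : DFA (Fin 2) (Fin n) :=
  { step := step11 n hn, start := ⟨0, by omega⟩, accept := {⟨n - 1, by omega⟩} }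

theorem dfa_step : (dfa hn).step = step11 n hn := rfl

theorem dfa_accept_closed :
    ∀ q ∈ (dfa hn).accept, ∀ l, (dfa hn).step q l ∈ (dfa hn).accept := by
  rintro q rfl l
  exact step_sink hn l

theorem val_eval_replicate {k : ℕ} (hk : k ≤ n - 2) :
    ((dfa hn).eval (List.replicate k 0)).val = k := by
  rw [DFA.eval, DFA.evalFrom_replicate, dfa_step,
    val_iterate_step_zero hn (q := (dfa hn).start) ((Nat.zero_add k).trans_le hk)]
  exact Nat.zero_add k

theorem eval_surjective : Function.Surjective (dfa hn).eval := by
  intro q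
  by_cases hq : q = sink hn
  · refine ⟨List.replicate (n - 2) 0 ++ [1], ?_⟩
    have hpivot : (dfa hn).eval (List.replicate (n - 2) 0) = pivot hn :=
      Fin.ext (val_eval_replicate hn le_rfl)
    rw [DFA.eval_append_singleton, hpivot, hq]
    exact step_pivot_one hn
  · exact ⟨List.replicate q.val 0, Fin.ext (val_eval_replicate hn (val_le_of_ne_sink hn hq))⟩

theorem replicate_append_one_mem_acceptsFrom {q : Fin n} {k : ℕ} (hq : q.val + k ≤ n - 2) :
    List.replicate k 0 ++ [1] ∈ (dfa hn).acceptsFrom q ↔ q.val + k = n - 2 := by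
  have hval := val_iterate_step_zero hn hq
  rw [DFA.mem_acceptsFrom, DFA.evalFrom_of_append, DFA.evalFrom_replicate,
    DFA.evalFrom_singleton, dfa_step]
  constructor
  · intro h
    by_contra hne
    have hfix := step_one_of_ne hn (q := (step11 n hn · 0)^[k] q)
      (fun h' => hne (by rw [← hval, h']; rfl))
    rw [hfix] at h
    have := congrArg Fin.val h
    simp only at this
    omega
  · intro h
    rw [show (step11 n hn · 0)^[k] q = pivot hn from Fin.ext (hval.trans h)]
    exact step_pivot_one hn

theorem acceptsFrom_injective : Function.Injective (dfa hn).acceptsFrom := by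
  have nil_mem : ∀ q : Fin n, [] ∈ (dfa hn).acceptsFrom q ↔ q = sink hn := fun _ => Iff.rfl
  intro p q h
  by_cases hp : p = sink hn
  · rw [hp, (nil_mem q).1 (h ▸ (nil_mem p).2 hp)]
  by_cases hq : q = sink hn
  · rw [hq, (nil_mem p).1 (h.symm ▸ (nil_mem q).2 hq)]
  wlog hpq : p.val ≤ q.val generalizing p q
  · exact (this h.symm hq hp (by omega)).symm
  have hq' := val_le_of_ne_sink hn hq
  have hmem :=
    (replicate_append_one_mem_acceptsFrom hn (q := q) (k := n - 2 - q.val) (by omega)).2 (by omega)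
  rw [← h, replicate_append_one_mem_acceptsFrom hn (q := p) (by omega)] at hmem
  exact Fin.ext (by omega)

theorem sink_mem_statesAccepting (u : List (Fin 2)) :
    sink hn ∈ (dfa hn).statesAccepting u :=
  (dfa hn).evalFrom_mem_accept (dfa_accept_closed hn) rfl u

theorem statesAccepting_one_cons (u : List (Fin 2)) :
    (dfa hn).statesAccepting (1 :: u) = insert (pivot hn) ((dfa hn).statesAccepting u) := by
  ext q
  rw [DFA.statesAccepting_cons, Set.mem_preimage, Set.mem_insert_iff, dfa_step]
  by_cases hq : q = pivot hn
  · rw [hq, step_pivot_one]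
    exact iff_of_true (sink_mem_statesAccepting hn u) (Or.inl rfl)
  · rw [step_one_of_ne hn hq, or_iff_right hq]

/-- Generalising over the rotation `a^m` lets the induction insert an arbitrary state `x`:
rotate `x` onto the pivot, where `d` adds it, and rotate back by taking the preimage. -/
theorem exists_statesAccepting_eq_image_insert_sink (s : Set (Fin n)) (m : ℕ) :
    ∃ u, (dfa hn).statesAccepting u = (step11 n hn · 0)^[m] '' insert (sink hn) s := by
  induction s, s.toFinite using Set.Finite.induction_on generalizing m with
  | empty =>
    refine ⟨[], ?_⟩
    rw [LawfulSingleton.insert_empty_eq, Set.image_singleton, iterate_step_zero_sink]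
    rfl
  | @insert x s _ _ ih =>
    by_cases hx : x = sink hn
    · rw [hx, Set.insert_idem]
      exact ih m
    set y := (step11 n hn · 0)^[m] x
    have hy : y.val ≤ n - 2 := val_le_of_ne_sink hn fun h =>
      hx ((step_zero_injective hn).iterate m (h.trans (iterate_step_zero_sink hn m).symm))
    have hpivot : (step11 n hn · 0)^[n - 2 - y.val] y = pivot hn :=
      Fin.ext ((val_iterate_step_zero hn (by omega)).trans (by simp only [pivot]; omega))
    obtain ⟨u, hu⟩ := ih (n - 2 - y.val + m)
    refine ⟨List.replicate (n - 2 - y.val) 0 ++ 1 :: u, ?_⟩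
    simp only [DFA.statesAccepting_append, DFA.evalFrom_replicate, dfa_step]
    rw [statesAccepting_one_cons, hu, Function.iterate_add, Set.image_comp, ← hpivot,
      ← Set.image_insert_eq, Set.preimage_image_eq _ ((step_zero_injective hn).iterate _),
      Set.insert_comm (sink hn) x,
      Set.image_insert_eq (a := x)]

theorem range_statesAccepting :
    Set.range (dfa hn).statesAccepting = {S | sink hn ∈ S} := by
  ext S
  refine ⟨by rintro ⟨u, rfl⟩; exact sink_mem_statesAccepting hn u, fun (hS : sink hn ∈ S) => ?_⟩
  obtain ⟨u, hu⟩ := exists_statesAccepting_eq_image_insert_sink hn S 0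
  exact ⟨u, by rw [hu, Function.iterate_zero, Set.image_id, Set.insert_eq_of_mem hS]⟩

end Step11

/-- For `n ≥ 4`, the binary automaton `𝒜'_n` accepts a right
ideal with quotient complexity `n`, and the reverse of this language has
quotient complexity exactly `2^{n-1}`. -/
theorem stmt_11 (n : ℕ) (hn : 4 ≤ n) :
    let M : DFA (Fin 2) (Fin n) :=
      { step := step11 n hn, start := ⟨0, by omega⟩, accept := {⟨n - 1, by omega⟩} }
    IsRightIdeal (M.accepts : Set (List (Fin 2))) ∧
    quotCompl (M.accepts : Set (List (Fin 2))) = n ∧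
    quotCompl (langReverse (M.accepts : Set (List (Fin 2)))) = 2 ^ (n - 1) := by
  show IsRightIdeal ((Step11.dfa hn).accepts : Set (List (Fin 2))) ∧
    quotCompl ((Step11.dfa hn).accepts : Set (List (Fin 2))) = n ∧
    quotCompl (langReverse ((Step11.dfa hn).accepts : Set (List (Fin 2)))) = 2 ^ (n - 1)
  refine ⟨(Step11.dfa hn).isRightIdeal_accepts ?_ (Step11.dfa_accept_closed hn), ?_, ?_⟩
  · obtain ⟨w, hw⟩ := Step11.eval_surjective hn (Step11.sink hn)
    exact ⟨w, hw⟩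
  · rw [(Step11.dfa hn).quotCompl_accepts (Step11.eval_surjective hn)
      (Step11.acceptsFrom_injective hn), Nat.card_eq_fintype_card, Fintype.card_fin]
  · rw [(Step11.dfa hn).quotCompl_langReverse_accepts (Step11.eval_surjective hn),
      Step11.range_statesAccepting, Set.natCard_setOf_mem, Fintype.card_fin]
end

section
/- For every n ≥ 3, let A_n be the deterministic finite automaton with state set {0,1,…,n-1}, alphabet {a,b,c,d,e}, initial state 0, and final state set F equal to any non-empty subset of {1,…,n-1}, where a acts as the cycle (1,2,…,n-1) fixing 0, b acts as the transposition (1,2), c maps n-1 to 1 and fixes all other states, d maps n-1 to 0 and fixes all other states, and e maps every state to 1. Then A_n is minimal, and the language L = L(A_n) is a left ideal with quotient complexity n and syntactic complexity σ(L) = n^{n-1} + n - 1. -/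
/-- A DFA is minimal: every state is reachable from the start state, and no two
distinct states accept the same set of words. -/
def DFAMinimal {α σ : Type*} (M : DFA α σ) : Prop :=
  (∀ q : σ, ∃ w : List α, M.evalFrom M.start w = q) ∧
  ∀ p q : σ, (∀ w : List α, M.evalFrom p w ∈ M.accept ↔ M.evalFrom q w ∈ M.accept) → p = q

/-- The transition function of the automaton `𝒜_n` of Theorem 5 (left ideals):
`a = (1,2,…,n-1)` fixing `0`, `b = (1,2)`, `c : n-1 ↦ 1`, `d : n-1 ↦ 0`, and
`e` maps every state to `1`. -/
def step15 (n : ℕ) (hn : 3 ≤ n) : Fin n → Fin 5 → Fin n := fun q l =>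
  if l.val = 0 then -- a : the cycle (1, 2, …, n-1), fixing 0
    if q.val = 0 then q
    else if _h : q.val = n - 1 then ⟨1, by omega⟩
    else ⟨q.val + 1, by have := q.isLt; omega⟩
  else if l.val = 1 then -- b : the transposition (1, 2)
    if q.val = 1 then ⟨2, by omega⟩
    else if q.val = 2 then ⟨1, by omega⟩
    else q
  else if l.val = 2 then -- c : n-1 ↦ 1, fixing all other states
    if q.val = n - 1 then ⟨1, by omega⟩ else q
  else if l.val = 3 then -- d : n-1 ↦ 0, fixing all other states
    if q.val = n - 1 then ⟨0, by omega⟩ else q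
  else -- e : the constant transformation sending every state to 1
    ⟨1, by omega⟩


section Transformations

open Equiv Function

variable {X : Type*}

def fixOrConst (z : X) : Submonoid (Function.End X) where
  carrier := {f | f z = z ∨ ∃ c, f = fun _ => c}
  one_mem' := Or.inl rfl
  mul_mem' := by
    rintro f g (hf | ⟨c, rfl⟩) (hg | ⟨d, rfl⟩)
    · exact Or.inl ((congrArg f hg).trans hf)
    · exact Or.inr ⟨f d, rfl⟩
    · exact Or.inr ⟨c, rfl⟩
    · exact Or.inr ⟨c, rfl⟩

theorem Submonoid.inv_mem_of_finite {G : Type*} [Group G] [Finite G] (P : Submonoid G) {x : G}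
    (hx : x ∈ P) : x⁻¹ ∈ P :=
  Submonoid.powers_le.mpr hx <|
    mem_powers_iff_mem_zpowers.mpr (Subgroup.inv_mem _ (Subgroup.mem_zpowers x))

theorem ncard_setOf_apply_ne_lt [Finite X] {f g : X → X} {x : X} (hfx : f x ≠ x) (hgx : g x = x)
    (h : ∀ w, g w ≠ w → f w ≠ w) : {w | g w ≠ w}.ncard < {w | f w ≠ w}.ncard :=
  Set.ncard_lt_ncard ⟨h, fun hsub => hsub hfx hgx⟩ (Set.toFinite _)

variable [DecidableEq X]

theorem swap_comp_update_id_comp_swap (s t x y : X) :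
    ⇑(swap s t) ∘ update id x y ∘ ⇑(swap s t) = update id (swap s t x) (swap s t y) := by
  ext w
  simp only [comp_apply, update_apply, id]
  split_ifs <;> simp_all [swap_apply_eq_iff]

variable {S : Submonoid (Function.End X)} {z : X}

theorem mem_of_apply_eq_self [Finite X]
    (hswap : ∀ x y, x ≠ z → y ≠ z → (⇑(swap x y) : Function.End X) ∈ S)
    (hupdate : ∀ x y, x ≠ z → x ≠ y → (update id x y : Function.End X) ∈ S)
    {f : X → X} (hf : f z = z) : (f : Function.End X) ∈ S := by
  -- Induction on the number of points moved by `f`: peel off `update id x (f x)` when `f x` is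
  -- a fixed point of `f`, and the transposition `swap x (f x)` otherwise.
  induction h : {w | f w ≠ w}.ncard using Nat.strong_induction_on generalizing f with
  | _ k ih =>
  subst h
  by_cases hid : ∀ x, f x = x
  · exact (funext hid : f = id) ▸ S.one_mem
  obtain ⟨x, hx⟩ := not_forall.mp hid
  have hxz : x ≠ z := by rintro rfl; exact hx hf
  by_cases hfix : f (f x) = f x
  · have hdecomp : f = update f x x ∘ update id x (f x) := by
      ext w
      rcases eq_or_ne w x with rfl | hw
      · simp only [comp_apply, update_self]; rw [update_of_ne hx, hfix]
      · simp [hw]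
    have hg : update f x x z = z := by rw [update_of_ne hxz.symm, hf]
    rw [hdecomp]
    refine S.mul_mem (ih _ (ncard_setOf_apply_ne_lt hx (update_self x x f) fun w hw => ?_) hg rfl)
      (hupdate x (f x) hxz (Ne.symm hx))
    by_cases hwx : w = x
    · subst hwx; simp at hw
    · simpa [hwx] using hw
  · have hyz : f x ≠ z := by intro h; rw [h, hf] at hfix; exact hfix rfl
    have hdecomp : f = (f ∘ swap x (f x)) ∘ swap x (f x) := by
      ext w; simp
    have hg : (f ∘ swap x (f x)) z = z := by
      simp [swap_apply_of_ne_of_ne hxz.symm hyz.symm, hf]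
    rw [hdecomp]
    refine S.mul_mem (ih _ (ncard_setOf_apply_ne_lt hfix (by simp) fun w hw => ?_) hg rfl)
      (hswap x (f x) hxz hyz)
    rcases eq_or_ne w x with rfl | hwx
    · exact hx
    rcases eq_or_ne w (f x) with rfl | hwy
    · simp at hw
    · simpa [swap_apply_of_ne_of_ne hwx hwy] using hw

theorem update_id_mem_of_swap_mem
    (hswap : ∀ x y, x ≠ z → y ≠ z → (⇑(swap x y) : Function.End X) ∈ S)
    {p q : X} (hpz : p ≠ z) (hpq : p ≠ q) (hmem : (update id p q : Function.End X) ∈ S)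
    {x y : X} (hxz : x ≠ z) (hxy : x ≠ y) (hqy : q = z ↔ y = z) :
    (update id x y : Function.End X) ∈ S := by
  have conj : ∀ {s t x y : X}, s ≠ z → t ≠ z → (update id x y : Function.End X) ∈ S →
      (update id (swap s t x) (swap s t y) : Function.End X) ∈ S := fun hs ht hu => by
    rw [← swap_comp_update_id_comp_swap]
    exact S.mul_mem (hswap _ _ hs ht) (S.mul_mem hu (hswap _ _ hs ht))
  have h₁ := conj hpz hxz hmem
  rw [swap_apply_left] at h₁
  by_cases hqz : q = z
  · rwa [hqz, swap_apply_of_ne_of_ne hpz.symm hxz.symm, ← hqy.mp hqz] at h₁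
  set q' := swap p x q
  have hq'x : q' ≠ x := by rw [← swap_apply_left p x]; exact (swap p x).injective.ne hpq.symm
  have hq'z : q' ≠ z := by
    rw [← swap_apply_of_ne_of_ne hpz.symm hxz.symm]; exact (swap p x).injective.ne hqz
  have h₂ := conj hq'z (mt hqy.mpr hqz) h₁
  rwa [swap_apply_of_ne_of_ne hq'x.symm hxy, swap_apply_left] at h₂

theorem fixOrConst_le [Finite X] (hfix : ∀ f : X → X, f z = z → (f : Function.End X) ∈ S)
    {c : X} (hc : c ≠ z) (hconst : (fun _ => c : Function.End X) ∈ S) : fixOrConst z ≤ S := by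
  rintro f (hf | ⟨d, rfl⟩)
  · exact hfix f hf
  · have hg : update (fun _ => d) z z z = z := by simp
    have hd : (fun _ : X => d) = update (fun _ => d) z z ∘ fun _ : X => c :=
      funext fun _ => by simp [hc]
    rw [hd]
    exact S.mul_mem (hfix _ hg) hconst

theorem card_fixOrConst [Fintype X] (z : X) :
    Nat.card (fixOrConst z) = Fintype.card X ^ (Fintype.card X - 1) + Fintype.card X - 1 := by
  classical
  set A := Fintype.piFinset fun x : X => if x = z then {z} else Finset.univ
  set B := (Finset.univ.erase z).image fun c : X => fun _ : X => c
  have hA_mem : ∀ f, f ∈ A ↔ f z = z := fun f => by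
    refine Fintype.mem_piFinset.trans ⟨fun h => by simpa using h z, fun h x => ?_⟩
    split_ifs with hx
    · simp [hx, h]
    · exact Finset.mem_univ _
  have hA : A.card = Fintype.card X ^ (Fintype.card X - 1) := by
    rw [Fintype.card_piFinset, ← Finset.mul_prod_erase _ _ (Finset.mem_univ z),
      Finset.prod_congr rfl fun x hx => by rw [if_neg (Finset.ne_of_mem_erase hx)]]
    simp [Finset.card_erase_of_mem]
  have hB : B.card = Fintype.card X - 1 := by
    rw [Finset.card_image_of_injective _ fun c d h => congrFun h z,
      Finset.card_erase_of_mem (Finset.mem_univ z), Finset.card_univ]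
  have hdisj : Disjoint A B := by
    refine Finset.disjoint_left.mpr fun f hfA hfB => ?_
    obtain ⟨c, hc, rfl⟩ := Finset.mem_image.mp hfB
    exact Finset.ne_of_mem_erase hc ((hA_mem _).mp hfA)
  have hmem : ∀ f : X → X, f ∈ fixOrConst z ↔ f ∈ A ∪ B := fun f => by
    simp only [Finset.mem_union, hA_mem, B, Finset.mem_image, Finset.mem_erase,
      Finset.mem_univ, and_true]
    constructor
    · rintro (hf | ⟨c, rfl⟩)
      · exact Or.inl hf
      · by_cases hc : c = z
        · exact Or.inl hc
        · exact Or.inr ⟨c, hc, rfl⟩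
    · rintro (hf | ⟨c, -, rfl⟩)
      · exact Or.inl hf
      · exact Or.inr ⟨c, rfl⟩
  have hcard : Nat.card (fixOrConst z) = (A ∪ B).card :=
    (Nat.card_congr (Equiv.subtypeEquivRight hmem)).trans (Nat.card_eq_finsetCard _)
  rw [hcard, Finset.card_union_of_disjoint hdisj, hA, hB]
  have : 0 < Fintype.card X := Fintype.card_pos_iff.mpr ⟨z⟩
  omega

end Transformations

namespace DFA

variable {α σ : Type*} (M : DFA α σ)

def transitionMonoid : Submonoid (Function.End σ) where
  carrier := Set.range fun w : List α => fun q => M.evalFrom q w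
  one_mem' := ⟨[], rfl⟩
  mul_mem' := by
    rintro _ _ ⟨u, rfl⟩ ⟨v, rfl⟩
    exact ⟨v ++ u, funext fun q => M.evalFrom_of_append q v u⟩

theorem step_mem_transitionMonoid (a : α) :
    (fun q => M.step q a : Function.End σ) ∈ M.transitionMonoid :=
  ⟨[a], rfl⟩

theorem transitionMonoid_le {S : Submonoid (Function.End σ)}
    (h : ∀ a, (fun q => M.step q a : Function.End σ) ∈ S) : M.transitionMonoid ≤ S := by
  rintro _ ⟨w, rfl⟩
  induction w using List.reverseRecOn with
  | nil => exact S.one_mem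
  | append_singleton w a ih =>
    simp only [evalFrom_append_singleton]
    exact S.mul_mem (h a) ih

theorem range_evalFrom_ne_nil_eq_transitionMonoid {w₀ : List α} (hw₀ : w₀ ≠ [])
    (hid : ∀ q, M.evalFrom q w₀ = q) :
    Set.range (fun w : {w : List α // w ≠ []} => fun q => M.evalFrom q w.1) =
      (M.transitionMonoid : Set (Function.End σ)) := by
  refine Set.Subset.antisymm (fun _ ⟨w, hw⟩ => ⟨w.1, hw⟩) ?_
  rintro _ ⟨w, rfl⟩
  exact ⟨⟨w₀ ++ w, by simp [hw₀]⟩, funext fun q => by simp only [evalFrom_of_append, hid]⟩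

theorem isLeftIdeal_accepts_of_le_fixOrConst (hle : M.transitionMonoid ≤ fixOrConst M.start)
    (hstart : M.start ∉ M.accept) (hne : (M.accepts : Set (List α)).Nonempty) :
    IsLeftIdeal (M.accepts : Set (List α)) := by
  refine ⟨hne, Set.ext fun x => ⟨fun hx => ⟨[], x, hx, rfl⟩, ?_⟩⟩
  rintro ⟨u, v, hv, rfl⟩
  rcases hle ⟨v, rfl⟩ with hfix | ⟨c, hc⟩
  · exact absurd (hfix ▸ hv) hstart
  · have hc' : ∀ q, M.evalFrom q v = c := congrFun hc
    have hv' : M.evalFrom M.start v ∈ M.accept := hv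
    show M.evalFrom M.start (u ++ v) ∈ M.accept
    rwa [evalFrom_of_append, hc', ← hc' M.start]

theorem dfaMinimal_of_fixOrConst_le (hle : fixOrConst M.start ≤ M.transitionMonoid)
    (hstart : M.start ∉ M.accept) (hacc : M.accept.Nonempty) : DFAMinimal M := by
  classical
  obtain ⟨f₀, hf₀⟩ := hacc
  have hword : ∀ f : σ → σ, f ∈ fixOrConst M.start → ∃ w, ∀ q, M.evalFrom q w = f q :=
    fun f hf => (hle hf).imp fun w hw => congrFun hw
  refine ⟨fun q => (hword _ (Or.inr ⟨q, rfl⟩)).imp fun w hw => hw M.start, fun p q hpq => ?_⟩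
  by_contra hne
  wlog hp : p ≠ M.start generalizing p q
  · exact this q p (fun w => (hpq w).symm) (Ne.symm hne) fun hq => hne (by rw [not_not.mp hp, hq])
  obtain ⟨w, hw⟩ := hword (fun x => if x = p then f₀ else M.start) (Or.inl (if_neg hp.symm))
  have := hpq w
  rw [hw, hw, if_pos rfl, if_neg (Ne.symm hne)] at this
  exact hstart (this.mp hf₀)

theorem leftQ_accepts (w : List α) :
    leftQ (M.accepts : Set (List α)) w = M.acceptsFrom (M.eval w) := by
  ext x
  exact Eq.to_iff (congrArg (· ∈ M.accept) (M.evalFrom_of_append M.start w x))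

end DFA

section Minimal

variable {α σ : Type*} {M : DFA α σ}

theorem DFAMinimal.quotCompl_accepts (hM : DFAMinimal M) :
    quotCompl (M.accepts : Set (List α)) = Nat.card σ := by
  have hrange : Set.range (leftQ (M.accepts : Set (List α))) = Set.range M.acceptsFrom := by
    ext L
    simp only [Set.mem_range, DFA.leftQ_accepts]
    exact ⟨fun ⟨w, hw⟩ => ⟨_, hw⟩, fun ⟨q, hq⟩ => (hM.1 q).imp fun w hw => by rw [← hq, ← hw]; rfl⟩
  have hinj : Function.Injective M.acceptsFrom := fun p q h =>
    hM.2 p q fun w => Set.ext_iff.mp h w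
  unfold quotCompl
  rw [hrange]
  exact Nat.card_range_of_injective hinj

theorem DFAMinimal.synRel_accepts_iff (hM : DFAMinimal M) {x y : List α} :
    synRel (M.accepts : Set (List α)) x y ↔
      (fun q => M.evalFrom q x) = fun q => M.evalFrom q y := by
  have key : ∀ u z v, u ++ z ++ v ∈ (M.accepts : Set (List α)) ↔
      M.evalFrom (M.evalFrom (M.eval u) z) v ∈ M.accept := fun u z v => by
    show M.evalFrom M.start (u ++ z ++ v) ∈ M.accept ↔ _
    rw [DFA.evalFrom_of_append, DFA.evalFrom_of_append]; rfl
  constructor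
  · refine fun h => funext fun q => ?_
    obtain ⟨u, rfl⟩ := hM.1 q
    exact hM.2 _ _ fun v => (key u x v).symm.trans ((h u v).trans (key u y v))
  · intro h u v
    have h' : ∀ q, M.evalFrom q x = M.evalFrom q y := congrFun h
    exact (key u x v).trans (by rw [h']; exact (key u y v).symm)

theorem DFAMinimal.synCompl_accepts (hM : DFAMinimal M) :
    synCompl (M.accepts : Set (List α)) =
      Nat.card (Set.range fun w : {w : List α // w ≠ []} => fun q => M.evalFrom q w.1) :=
  Nat.card_congr <| (Quotient.congrRight fun _ _ => hM.synRel_accepts_iff).trans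
    (Setoid.quotientKerEquivRange _)

end Minimal

section Automaton

open Equiv Function

variable {n : ℕ} (hn : 3 ≤ n)

theorem step15_zero_injective : Injective (step15 n hn · 0) := by
  intro p q h
  simp only [step15, Fin.ext_iff] at h ⊢
  split_ifs at h <;> simp_all

theorem step15_mk_zero {j : ℕ} (hj : 1 ≤ j) (h : j + 1 < n) :
    step15 n hn ⟨j, by omega⟩ 0 = ⟨j + 1, h⟩ := by
  have hj0 : j ≠ 0 := by omega
  have hjn : j ≠ n - 1 := by omega
  simp [step15, hj0, hjn]

theorem step15_one_eq_swap : (step15 n hn · 1) = ⇑(swap ⟨1, by omega⟩ ⟨2, by omega⟩) := by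
  ext q
  simp only [step15, swap_apply_def, Fin.ext_iff]
  split_ifs <;> simp_all

theorem step15_two_eq_update :
    (step15 n hn · 2) = update id ⟨n - 1, by omega⟩ ⟨1, by omega⟩ := by
  ext q
  simp only [step15, update_apply, Fin.ext_iff]
  split_ifs <;> simp_all

theorem step15_three_eq_update :
    (step15 n hn · 3) = update id ⟨n - 1, by omega⟩ ⟨0, by omega⟩ := by
  ext q
  simp only [step15, update_apply, Fin.ext_iff]
  split_ifs <;> simp_all

theorem step15_four_eq_const : (step15 n hn · 4) = fun _ => ⟨1, by omega⟩ := by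
  ext q
  simp [step15]

theorem step15_start_of_ne_four {l : Fin 5} (hl : l ≠ 4) :
    step15 n hn ⟨0, by omega⟩ l = ⟨0, by omega⟩ := by
  have : l.val ≠ 4 := fun h => hl (Fin.ext h)
  simp only [step15, Fin.ext_iff]
  split_ifs <;> simp_all <;> omega

noncomputable def rotation15 : Perm (Fin n) :=
  Equiv.ofBijective _ (Finite.injective_iff_bijective.mp (step15_zero_injective hn))

variable (F : Set (Fin n))

def mostComplexLeftIdealDFA : DFA (Fin 5) (Fin n) :=
  { step := step15 n hn, start := ⟨0, by omega⟩, accept := F }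

theorem step15_mem_transitionMonoid (l : Fin 5) :
    (step15 n hn · l : Function.End (Fin n)) ∈ (mostComplexLeftIdealDFA hn F).transitionMonoid :=
  DFA.step_mem_transitionMonoid _ l

theorem swap_mem_transitionMonoid {x y : Fin n} (hx : x ≠ ⟨0, by omega⟩)
    (hy : y ≠ ⟨0, by omega⟩) :
    (⇑(swap x y) : Function.End (Fin n)) ∈ (mostComplexLeftIdealDFA hn F).transitionMonoid := by
  set T := (mostComplexLeftIdealDFA hn F).transitionMonoid
  let P := T.comap (MulAction.toEndHom (M := Perm (Fin n)) (α := Fin n))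
  have hP : ∀ σ : Perm (Fin n), σ ∈ P ↔ (⇑σ : Function.End (Fin n)) ∈ T := fun _ => Iff.rfl
  have ha : rotation15 hn ∈ P := step15_mem_transitionMonoid hn F 0
  have ha' : (rotation15 hn)⁻¹ ∈ P := P.inv_mem_of_finite ha
  have hrot : ∀ j (hj : 1 ≤ j) (h : j + 1 < n), rotation15 hn ⟨j, by omega⟩ = ⟨j + 1, h⟩ :=
    fun _ hj h => step15_mk_zero hn hj h
  -- conjugation by the rotation `a` shifts `(k+1 k+2)` to `(k+2 k+3)`, starting from `b = (1 2)`
  have adjacent : ∀ k (h : k + 2 < n), swap ⟨k + 1, by omega⟩ ⟨k + 2, h⟩ ∈ P := by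
    intro k
    induction k with
    | zero => intro h; rw [hP, ← step15_one_eq_swap hn]; exact step15_mem_transitionMonoid hn F 1
    | succ k ih =>
      intro h
      rw [← hrot (k + 1) (by omega) (by omega), ← hrot (k + 2) (by omega) h, swap_apply_apply]
      exact P.mul_mem (P.mul_mem ha (ih (by omega))) ha'
  have one_succ : ∀ k (h : k + 1 < n), swap ⟨1, by omega⟩ ⟨k + 1, h⟩ ∈ P := by
    intro k
    induction k with
    | zero => intro h; rw [swap_self]; exact P.one_mem
    | succ k ih => exact fun h => SubmonoidClass.swap_mem_trans P (ih (by omega)) (adjacent k h)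
  have one_of_ne : ∀ x : Fin n, x ≠ ⟨0, by omega⟩ → swap ⟨1, by omega⟩ x ∈ P := by
    rintro ⟨_ | k, hk⟩ hx
    · exact absurd rfl hx
    · exact one_succ k hk
  exact SubmonoidClass.swap_mem_trans P (swap_comm x _ ▸ one_of_ne x hx) (one_of_ne y hy)

theorem update_mem_transitionMonoid {x y : Fin n} (hx : x ≠ ⟨0, by omega⟩) (hxy : x ≠ y) :
    (update id x y : Function.End (Fin n)) ∈ (mostComplexLeftIdealDFA hn F).transitionMonoid := by
  have hswap := fun x y => swap_mem_transitionMonoid hn F (x := x) (y := y)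
  have hlast : (⟨n - 1, by omega⟩ : Fin n) ≠ ⟨0, by omega⟩ := by simp [Fin.ext_iff]; omega
  by_cases hy : y = ⟨0, by omega⟩
  · exact update_id_mem_of_swap_mem hswap hlast hlast
      (step15_three_eq_update hn ▸ step15_mem_transitionMonoid hn F 3) hx hxy (iff_of_true rfl hy)
  · exact update_id_mem_of_swap_mem hswap hlast (by simp [Fin.ext_iff]; omega)
      (step15_two_eq_update hn ▸ step15_mem_transitionMonoid hn F 2) hx hxy
      (iff_of_false (by simp [Fin.ext_iff]) hy)

theorem transitionMonoid_mostComplexLeftIdealDFA :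
    (mostComplexLeftIdealDFA hn F).transitionMonoid = fixOrConst ⟨0, by omega⟩ := by
  refine le_antisymm (DFA.transitionMonoid_le _ fun l => ?_) (fixOrConst_le
    (fun f hf => mem_of_apply_eq_self (fun x y => swap_mem_transitionMonoid hn F)
      (fun x y hx hxy => update_mem_transitionMonoid hn F hx hxy) hf)
    (c := ⟨1, by omega⟩) (by simp [Fin.ext_iff])
    (step15_four_eq_const hn ▸ step15_mem_transitionMonoid hn F 4))
  by_cases hl : l = 4
  · subst hl; exact Or.inr ⟨_, step15_four_eq_const hn⟩
  · exact Or.inl (step15_start_of_ne_four hn hl)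

end Automaton

/-- For `n ≥ 3` and any non-empty set `F ⊆ {1,…,n-1}` of
final states, the automaton `𝒜_n` with states `{0,…,n-1}`, alphabet
`{a,b,c,d,e}`, initial state `0` and final states `F` is minimal, and its
language is a left ideal with quotient complexity `n` and syntactic complexity
`n^{n-1} + n - 1`. -/
theorem stmt_15 (n : ℕ) (hn : 3 ≤ n) (F : Set (Fin n)) (hF : F.Nonempty)
    (hF0 : ∀ q ∈ F, (q : ℕ) ≠ 0) :
    let M : DFA (Fin 5) (Fin n) :=
      { step := step15 n hn, start := ⟨0, by omega⟩, accept := F }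
    DFAMinimal M ∧
    IsLeftIdeal (M.accepts : Set (List (Fin 5))) ∧
    quotCompl (M.accepts : Set (List (Fin 5))) = n ∧
    synCompl (M.accepts : Set (List (Fin 5))) = n ^ (n - 1) + n - 1 := by
  intro M
  have hT : M.transitionMonoid = fixOrConst M.start := transitionMonoid_mostComplexLeftIdealDFA hn F
  have hstart : M.start ∉ M.accept := fun h => hF0 _ h rfl
  have hmin : DFAMinimal M := M.dfaMinimal_of_fixOrConst_le hT.ge hstart hF
  refine ⟨hmin, M.isLeftIdeal_accepts_of_le_fixOrConst hT.le hstart ?_, ?_, ?_⟩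
  · obtain ⟨f, hf⟩ := hF
    obtain ⟨w, rfl⟩ := hmin.1 f
    exact ⟨w, hf⟩
  · rw [hmin.quotCompl_accepts, Nat.card_eq_fintype_card, Fintype.card_fin]
  · have hbb : ∀ q, M.evalFrom q [1, 1] = q := fun q => by
      have hb := congrFun (step15_one_eq_swap hn)
      exact (hb _).trans ((congrArg _ (hb q)).trans (Equiv.swap_apply_self _ _ _))
    rw [hmin.synCompl_accepts,
      M.range_evalFrom_ne_nil_eq_transitionMonoid (List.cons_ne_nil _ _) hbb, hT]
    exact (card_fixOrConst M.start).trans (by rw [Fintype.card_fin])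
end
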